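/- Let q, x, y be complex numbers with |q| < 1, |x| ≤ 1, |y| ≤ 1. Then Σ_{n₁,n₂,n₃,n₄ ≥ 0} x^{n₁+n₂+2n₄} y^{n₂+n₃} q^{2C(n₁,2) + 2n₁n₂ + 4n₁n₃ + 4n₃n₄ + n₁ + 3n₂ + 2n₃ + 2n₄} (1 + x²y q^{4+4(n₁+n₃)}) / ((q²;q²)_{n₁}(q²;q²)_{n₂}(q⁴;q⁴)_{n₃}(q⁴;q⁴)_{n₄}) = ((x²yq⁸;q⁴)_∞ / ((x²q²;q⁴)_∞ (xyq³;q²)_∞ (yq²;q⁴)_∞)) · Σ_{n ≥ 0} xⁿ q^{2C(n,2)+n} (1 − x²y² q^{8n+6}) (xyq³;q²)_n (yq²;q⁴)_n / ((q²;q²)_n (x²yq⁸;q⁴)_n). -/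

import Mathlib

/-- The finite q-Pochhammer symbol `(a; q)_n = ∏_{k=0}^{n-1} (1 - a q^k)`. -/
noncomputable def qPoch (a q : ℂ) (n : ℕ) : ℂ :=
  ∏ k ∈ Finset.range n, (1 - a * q ^ k)

/-- The infinite q-Pochhammer symbol `(a; q)_∞ = ∏_{k=0}^{∞} (1 - a q^k)`. -/
noncomputable def qPochInf (a q : ℂ) : ℂ :=
  ∏' k : ℕ, (1 - a * q ^ k)

/-!
The quadruple series is summed from the inside out. After factoring the summand, the sum over
`n₄` is Euler's series `∑ zⁿ / (q⁴; q⁴)ₙ = 1 / (z; q⁴)_∞` at `z = x² q^(4 n₃ + 2)`, which equals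
`(x² q²; q⁴)_{n₃} / (x² q²; q⁴)_∞`. The resulting sum over `n₃` combines two q-binomial series
into `∑ (a; Q)ₙ / (Q; Q)ₙ zⁿ (1 + a z Qⁿ) = (1 - a z²) (a Q z; Q)_∞ / (z; Q)_∞` with `a = x² q²`,
`Q = q⁴`, `z = y q^(4 n₁ + 2)`, and the sum over `n₂` is again Euler's series. Every term is
`O(|q|^(n₁ + n₂ + n₃ + n₄))` because `|x|, |y| ≤ 1`, which justifies summing iteratively.
-/

open Filter Topology

section QPochhammer

variable {a q : ℂ}

@[simp]
lemma qPoch_zero (a q : ℂ) : qPoch a q 0 = 1 := by simp [qPoch]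

lemma qPoch_succ (a q : ℂ) (n : ℕ) : qPoch a q (n + 1) = qPoch a q n * (1 - a * q ^ n) :=
  Finset.prod_range_succ _ _

lemma qPoch_add (a q : ℂ) (m n : ℕ) :
    qPoch a q (m + n) = qPoch a q m * qPoch (a * q ^ m) q n := by
  simp only [qPoch, Finset.prod_range_add, mul_assoc, ← pow_add]

@[simp]
lemma qPoch_zero_left (q : ℂ) (n : ℕ) : qPoch 0 q n = 1 := by simp [qPoch]

@[simp]
lemma qPochInf_zero_left (q : ℂ) : qPochInf 0 q = 1 := by simp [qPochInf]

lemma summable_norm_mul_pow (a : ℂ) (hq : ‖q‖ < 1) : Summable fun k : ℕ => ‖a * q ^ k‖ := by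
  simpa [norm_mul] using (summable_norm_geometric_of_norm_lt_one hq).mul_left ‖a‖

lemma multipliable_one_sub_mul_pow (a : ℂ) (hq : ‖q‖ < 1) :
    Multipliable fun k : ℕ => 1 - a * q ^ k := by
  simpa [sub_eq_add_neg] using
    multipliable_one_add_of_summable (f := fun k : ℕ => -(a * q ^ k))
      (by simpa using summable_norm_mul_pow a hq)

lemma tendsto_qPoch (a : ℂ) (hq : ‖q‖ < 1) :
    Tendsto (qPoch a q) atTop (𝓝 (qPochInf a q)) :=
  (multipliable_one_sub_mul_pow a hq).hasProd.tendsto_prod_nat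

lemma qPochInf_ne_zero (hq : ‖q‖ < 1) (h : ∀ k, 1 - a * q ^ k ≠ 0) : qPochInf a q ≠ 0 := by
  simpa [qPochInf, sub_eq_add_neg] using
    tprod_one_add_ne_zero_of_summable (f := fun k : ℕ => -(a * q ^ k))
      (by simpa [sub_eq_add_neg] using h) (by simpa using summable_norm_mul_pow a hq)

lemma norm_pow_lt_one (hq : ‖q‖ < 1) {m : ℕ} (hm : m ≠ 0) : ‖q ^ m‖ < 1 :=
  (norm_pow q m).trans_lt (pow_lt_one₀ (norm_nonneg q) hq hm)

lemma norm_mul_pow_lt_one (ha : ‖a‖ < 1) (hq : ‖q‖ ≤ 1) (m : ℕ) : ‖a * q ^ m‖ < 1 := by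
  rw [norm_mul, norm_pow]
  exact mul_lt_one_of_nonneg_of_lt_one_left (norm_nonneg a) ha (pow_le_one₀ (norm_nonneg q) hq)

lemma norm_mul_pow_lt_one_of_norm_le_one (ha : ‖a‖ ≤ 1) (hq : ‖q‖ < 1) {m : ℕ} (hm : m ≠ 0) :
    ‖a * q ^ m‖ < 1 := by
  rw [norm_mul]
  exact mul_lt_one_of_nonneg_of_lt_one_right ha (norm_nonneg _) (norm_pow_lt_one hq hm)

lemma one_sub_mul_pow_ne_zero (ha : ‖a‖ < 1) (hq : ‖q‖ ≤ 1) (k : ℕ) : 1 - a * q ^ k ≠ 0 := by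
  refine sub_ne_zero.2 fun h => ?_
  simpa [← h] using norm_mul_pow_lt_one ha hq k

lemma qPoch_ne_zero (ha : ‖a‖ < 1) (hq : ‖q‖ ≤ 1) (n : ℕ) : qPoch a q n ≠ 0 :=
  Finset.prod_ne_zero_iff.2 fun k _ => one_sub_mul_pow_ne_zero ha hq k

lemma qPochInf_eq_qPoch_mul_qPochInf (a : ℂ) (hq : ‖q‖ < 1) (m : ℕ) :
    qPochInf a q = qPoch a q m * qPochInf (a * q ^ m) q := by
  refine tendsto_nhds_unique ((tendsto_qPoch a hq).comp (tendsto_add_atTop_nat m)) ?_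
  simpa only [Function.comp_def, add_comm _ m, qPoch_add] using
    (tendsto_qPoch (a * q ^ m) hq).const_mul (qPoch a q m)

lemma qPochInf_mul_pow (hq : ‖q‖ < 1) {m : ℕ} (h : qPoch a q m ≠ 0) :
    qPochInf (a * q ^ m) q = qPochInf a q / qPoch a q m := by
  rw [qPochInf_eq_qPoch_mul_qPochInf a hq m, mul_div_cancel_left₀ _ h]

lemma exists_norm_qPoch_div_qPoch_le (a : ℂ) (hq : ‖q‖ < 1) :
    ∃ B, ∀ n, ‖qPoch a q n / qPoch q q n‖ ≤ B := by
  have h := (tendsto_qPoch a hq).div (tendsto_qPoch q hq)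
    (qPochInf_ne_zero hq (one_sub_mul_pow_ne_zero hq hq.le))
  simpa using (Metric.isBounded_range_of_tendsto _ h).exists_norm_le

lemma exists_norm_inv_qPoch_le (hq : ‖q‖ < 1) : ∃ B, ∀ n, ‖(qPoch q q n)⁻¹‖ ≤ B := by
  simpa using exists_norm_qPoch_div_qPoch_le 0 hq

end QPochhammer

section QBinomial

variable {a q z : ℂ}

noncomputable def qBinomialSeries (a q z : ℂ) : ℂ :=
  ∑' n, qPoch a q n / qPoch q q n * z ^ n

lemma summable_qPoch_div_qPoch_mul_pow (a : ℂ) (hq : ‖q‖ < 1) (hz : ‖z‖ < 1) :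
    Summable fun n => qPoch a q n / qPoch q q n * z ^ n := by
  obtain ⟨B, hB⟩ := exists_norm_qPoch_div_qPoch_le a hq
  refine Summable.of_norm_bounded ((summable_geometric_of_lt_one (norm_nonneg z) hz).mul_left B)
    fun n => ?_
  rw [norm_mul, norm_pow]
  exact mul_le_mul_of_nonneg_right (hB n) (by positivity)

lemma qPoch_div_qPoch_succ_mul (a : ℂ) (hq : ‖q‖ < 1) (n : ℕ) :
    qPoch a q (n + 1) / qPoch q q (n + 1) * (1 - q ^ (n + 1)) =
      qPoch a q n / qPoch q q n * (1 - a * q ^ n) := by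
  have h₁ := qPoch_ne_zero hq hq.le n
  have h₂ : 1 - q ^ (n + 1) ≠ 0 := by
    simpa [← pow_succ'] using one_sub_mul_pow_ne_zero hq hq.le n
  rw [qPoch_succ, qPoch_succ, ← pow_succ']
  field_simp

lemma one_sub_mul_qBinomialSeries (a : ℂ) (hq : ‖q‖ < 1) (hz : ‖z‖ < 1) :
    (1 - z) * qBinomialSeries a q z = (1 - a * z) * qBinomialSeries a q (q * z) := by
  set c : ℕ → ℂ := fun n => qPoch a q n / qPoch q q n
  have hqz : ‖q * z‖ < 1 := by simpa [mul_comm] using norm_mul_pow_lt_one hz hq.le 1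
  have hS : Summable fun n => c n * z ^ n := summable_qPoch_div_qPoch_mul_pow a hq hz
  have hS' : Summable fun n => c n * (q * z) ^ n := summable_qPoch_div_qPoch_mul_pow a hq hqz
  have hT : Summable fun n => c n * (1 - q ^ n) * z ^ n :=
    (hS.sub hS').congr fun n => by ring
  have hdiff : qBinomialSeries a q z - qBinomialSeries a q (q * z) =
      ∑' n, c n * (1 - q ^ n) * z ^ n := by
    rw [qBinomialSeries, qBinomialSeries, ← hS.tsum_sub hS']
    exact tsum_congr fun n => by ring
  -- the `n = 0` term vanishes, and the coefficient recursion shifts the remaining ones by one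
  have hshift : ∑' n, c n * (1 - q ^ n) * z ^ n =
      z * (qBinomialSeries a q z - a * qBinomialSeries a q (q * z)) := calc
    _ = ∑' n, c (n + 1) * (1 - q ^ (n + 1)) * z ^ (n + 1) := by
      rw [hT.tsum_eq_zero_add]; simp
    _ = ∑' n, z * (c n * z ^ n - a * (c n * (q * z) ^ n)) :=
      tsum_congr fun n => by rw [qPoch_div_qPoch_succ_mul a hq n]; ring
    _ = _ := by rw [tsum_mul_left, hS.tsum_sub (hS'.mul_left a), tsum_mul_left]; rfl
  linear_combination hdiff + hshift

lemma qBinomialSeries_mul_qPoch (a : ℂ) (hq : ‖q‖ < 1) (hz : ‖z‖ < 1) (N : ℕ) :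
    qBinomialSeries a q z * qPoch z q N = qPoch (a * z) q N * qBinomialSeries a q (q ^ N * z) := by
  induction N with
  | zero => simp
  | succ N ih =>
    have hN : ‖q ^ N * z‖ < 1 := by simpa [mul_comm] using norm_mul_pow_lt_one hz hq.le N
    have h := one_sub_mul_qBinomialSeries a hq hN
    rw [show q * (q ^ N * z) = q ^ (N + 1) * z by ring] at h
    rw [qPoch_succ, qPoch_succ]
    linear_combination (1 - z * q ^ N) * ih + qPoch (a * z) q N * h

lemma tendsto_qBinomialSeries_pow_mul (a : ℂ) (hq : ‖q‖ < 1) (hz : ‖z‖ < 1) :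
    Tendsto (fun N => qBinomialSeries a q (q ^ N * z)) atTop (𝓝 1) := by
  obtain ⟨B, hB⟩ := exists_norm_qPoch_div_qPoch_le a hq
  have hlim : Tendsto (fun N => qBinomialSeries a q (q ^ N * z)) atTop
      (𝓝 (∑' n, qPoch a q n / qPoch q q n * 0 ^ n)) := by
    refine tendsto_tsum_of_dominated_convergence
      ((summable_geometric_of_lt_one (norm_nonneg z) hz).mul_left B) (fun n => ?_)
      (Eventually.of_forall fun N n => ?_)
    · have h0 : Tendsto (fun N => q ^ N * z) atTop (𝓝 0) := by
        simpa using (tendsto_pow_atTop_nhds_zero_of_norm_lt_one hq).mul_const z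
      exact (h0.pow n).const_mul _
    · rw [norm_mul, norm_pow, norm_mul, norm_pow]
      exact mul_le_mul (hB n) (pow_le_pow_left₀ (by positivity)
        (mul_le_of_le_one_left (norm_nonneg z) (pow_le_one₀ (norm_nonneg q) hq.le)) n)
        (by positivity) ((norm_nonneg _).trans (hB n))
  rwa [tsum_eq_single 0 fun n hn => by simp [hn], qPoch_zero, qPoch_zero, pow_zero,
    div_one, mul_one] at hlim

/-- The q-binomial theorem. -/
theorem qBinomialSeries_eq (a : ℂ) (hq : ‖q‖ < 1) (hz : ‖z‖ < 1) :
    qBinomialSeries a q z = qPochInf (a * z) q / qPochInf z q := by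
  have hlim := ((tendsto_qPoch (a * z) hq).mul (tendsto_qBinomialSeries_pow_mul a hq hz)).congr
    fun N => (qBinomialSeries_mul_qPoch a hq hz N).symm
  rw [mul_one] at hlim
  rw [eq_div_iff (qPochInf_ne_zero hq (one_sub_mul_pow_ne_zero hz hq.le)),
    tendsto_nhds_unique ((tendsto_qPoch z hq).const_mul _) hlim]

/-- Euler's identity. -/
theorem tsum_pow_div_qPoch (hq : ‖q‖ < 1) (hz : ‖z‖ < 1) :
    ∑' n, z ^ n / qPoch q q n = (qPochInf z q)⁻¹ := by
  have h := qBinomialSeries_eq 0 hq hz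
  rw [zero_mul, qPochInf_zero_left, ← inv_eq_one_div, qBinomialSeries] at h
  rw [← h]
  exact tsum_congr fun n => by rw [qPoch_zero_left, one_div_mul_eq_div]

theorem tsum_mul_pow_pow_div_qPoch (ha : ‖a‖ < 1) (hq : ‖q‖ < 1) (m : ℕ) :
    ∑' n, (a * q ^ m) ^ n / qPoch q q n = qPoch a q m / qPochInf a q := by
  rw [tsum_pow_div_qPoch hq (norm_mul_pow_lt_one ha hq.le m),
    qPochInf_mul_pow hq (qPoch_ne_zero ha hq.le m), inv_div]

theorem tsum_qPoch_div_qPoch_mul_pow_mul_one_add (a : ℂ) (hq : ‖q‖ < 1) (hz : ‖z‖ < 1) :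
    ∑' n, qPoch a q n / qPoch q q n * z ^ n * (1 + a * z * q ^ n) =
      (1 - a * z ^ 2) * qPochInf (a * q * z) q / qPochInf z q := by
  have hqz : ‖q * z‖ < 1 := by simpa [mul_comm] using norm_mul_pow_lt_one hz hq.le 1
  have hsplit : ∑' n, qPoch a q n / qPoch q q n * z ^ n * (1 + a * z * q ^ n) =
      qBinomialSeries a q z + a * z * qBinomialSeries a q (q * z) := by
    rw [qBinomialSeries, qBinomialSeries, ← tsum_mul_left,
      ← (summable_qPoch_div_qPoch_mul_pow a hq hz).tsum_add
        ((summable_qPoch_div_qPoch_mul_pow a hq hqz).mul_left _)]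
    exact tsum_congr fun n => by ring
  have hz₀ := qPochInf_eq_qPoch_mul_qPochInf z hq 1
  have haz₀ := qPochInf_eq_qPoch_mul_qPochInf (a * z) hq 1
  have hqz₀ := qPochInf_ne_zero hq (one_sub_mul_pow_ne_zero hqz hq.le)
  have h1z : 1 - z ≠ 0 := by simpa using one_sub_mul_pow_ne_zero hz hq.le 0
  rw [hsplit, qBinomialSeries_eq a hq hz, qBinomialSeries_eq a hq hqz, hz₀, haz₀]
  simp only [qPoch_succ, qPoch_zero, pow_one, pow_zero, mul_one, one_mul]
  field_simp
  ring_nf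

end QBinomial

section FourfoldSum

lemma summable_pow_add_add_add {r : ℝ} (hr0 : 0 ≤ r) (hr : r < 1) :
    Summable fun n : ℕ × ℕ × ℕ × ℕ => r ^ (n.1 + n.2.1 + n.2.2.1 + n.2.2.2) := by
  have h : Summable fun n : ℕ => ‖r ^ n‖ := by
    simpa [abs_of_nonneg, hr0] using summable_geometric_of_lt_one hr0 hr
  have h₂ := summable_mul_of_summable_norm h h
  have h₃ := summable_mul_of_summable_norm h h₂.norm
  have h₄ := summable_mul_of_summable_norm h h₃.norm
  simpa only [pow_add, mul_assoc] using h₄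

variable {f : ℕ → ℂ} {g h d : ℕ → ℕ → ℂ}

lemma tsum_four_eq_iterated (hs : Summable fun n : ℕ × ℕ × ℕ × ℕ =>
      f n.1 * g n.1 n.2.1 * h n.1 n.2.2.1 * d n.2.2.1 n.2.2.2) :
    ∑' n : ℕ × ℕ × ℕ × ℕ, f n.1 * g n.1 n.2.1 * h n.1 n.2.2.1 * d n.2.2.1 n.2.2.2 =
      ∑' i, f i * (∑' j, g i j) * ∑' k, h i k * ∑' l, d k l := by
  rw [hs.tsum_prod]
  refine tsum_congr fun i => ?_
  -- the constants are pulled out only at the end: a slice `h * d` alone need not be summable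
  rw [(hs.prod_factor i).tsum_prod]
  refine (tsum_congr fun j => ((hs.prod_factor i).prod_factor j).tsum_prod).trans ?_
  simp only [tsum_mul_left]
  simp only [mul_assoc, tsum_mul_left, tsum_mul_right]

end FourfoldSum

section QuadrupleSum

variable {q x y : ℂ}

lemma quadruple_summand_eq (q x y : ℂ) (i j k l : ℕ) :
    x ^ (i + j + 2 * l) * y ^ (j + k) *
        q ^ (2 * Nat.choose i 2 + 2 * i * j + 4 * i * k +
          4 * k * l + i + 3 * j + 2 * k + 2 * l) *
        (1 + x ^ 2 * y * q ^ (4 + 4 * (i + k))) /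
        (qPoch (q ^ 2) (q ^ 2) i * qPoch (q ^ 2) (q ^ 2) j *
          qPoch (q ^ 4) (q ^ 4) k * qPoch (q ^ 4) (q ^ 4) l) =
      x ^ i * q ^ (2 * Nat.choose i 2 + i) / qPoch (q ^ 2) (q ^ 2) i *
        ((x * y * q ^ 3 * (q ^ 2) ^ i) ^ j / qPoch (q ^ 2) (q ^ 2) j) *
        ((y * q ^ 2 * (q ^ 4) ^ i) ^ k *
            (1 + x ^ 2 * q ^ 2 * (y * q ^ 2 * (q ^ 4) ^ i) * (q ^ 4) ^ k) /
          qPoch (q ^ 4) (q ^ 4) k) *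
        ((x ^ 2 * q ^ 2 * (q ^ 4) ^ k) ^ l / qPoch (q ^ 4) (q ^ 4) l) := by
  ring

lemma norm_quadruple_numerator_le (hq : ‖q‖ ≤ 1) (hx : ‖x‖ ≤ 1) (hy : ‖y‖ ≤ 1) (i j k l : ℕ) :
    ‖x ^ (i + j + 2 * l) * y ^ (j + k) *
        q ^ (2 * Nat.choose i 2 + 2 * i * j + 4 * i * k + 4 * k * l + i + 3 * j + 2 * k + 2 * l) *
        (1 + x ^ 2 * y * q ^ (4 + 4 * (i + k)))‖ ≤ 2 * ‖q‖ ^ (i + j + k + l) := by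
  have hx' : ‖x‖ ^ (i + j + 2 * l) ≤ 1 := pow_le_one₀ (norm_nonneg x) hx
  have hy' : ‖y‖ ^ (j + k) ≤ 1 := pow_le_one₀ (norm_nonneg y) hy
  have hexp : ‖q‖ ^ (2 * Nat.choose i 2 + 2 * i * j + 4 * i * k +
      4 * k * l + i + 3 * j + 2 * k + 2 * l) ≤ ‖q‖ ^ (i + j + k + l) :=
    pow_le_pow_of_le_one (norm_nonneg q) hq (by omega)
  have hone : ‖1 + x ^ 2 * y * q ^ (4 + 4 * (i + k))‖ ≤ 2 := by
    have : ‖x ^ 2 * y * q ^ (4 + 4 * (i + k))‖ ≤ 1 := by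
      simp only [norm_mul, norm_pow]
      exact mul_le_one₀ (mul_le_one₀ (pow_le_one₀ (norm_nonneg x) hx) (norm_nonneg y) hy)
        (by positivity) (pow_le_one₀ (norm_nonneg q) hq)
    linarith [norm_add_le (1 : ℂ) (x ^ 2 * y * q ^ (4 + 4 * (i + k))), norm_one (α := ℂ)]
  simp only [norm_mul, norm_pow]
  calc _ ≤ 1 * 1 * ‖q‖ ^ (i + j + k + l) * 2 := by gcongr
    _ = _ := by ring

lemma summable_quadruple_summand (hq : ‖q‖ < 1) (hx : ‖x‖ ≤ 1) (hy : ‖y‖ ≤ 1) :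
    Summable fun n : ℕ × ℕ × ℕ × ℕ =>
      x ^ (n.1 + n.2.1 + 2 * n.2.2.2) * y ^ (n.2.1 + n.2.2.1) *
        q ^ (2 * Nat.choose n.1 2 + 2 * n.1 * n.2.1 + 4 * n.1 * n.2.2.1 +
          4 * n.2.2.1 * n.2.2.2 + n.1 + 3 * n.2.1 + 2 * n.2.2.1 + 2 * n.2.2.2) *
        (1 + x ^ 2 * y * q ^ (4 + 4 * (n.1 + n.2.2.1))) /
        (qPoch (q ^ 2) (q ^ 2) n.1 * qPoch (q ^ 2) (q ^ 2) n.2.1 *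
          qPoch (q ^ 4) (q ^ 4) n.2.2.1 * qPoch (q ^ 4) (q ^ 4) n.2.2.2) := by
  obtain ⟨B₂, hB₂⟩ := exists_norm_inv_qPoch_le (norm_pow_lt_one hq two_ne_zero)
  obtain ⟨B₄, hB₄⟩ := exists_norm_inv_qPoch_le (norm_pow_lt_one hq four_ne_zero)
  have h₂ : 0 ≤ B₂ := (norm_nonneg _).trans (hB₂ 0)
  have h₄ : 0 ≤ B₄ := (norm_nonneg _).trans (hB₄ 0)
  refine .of_norm_bounded ((summable_pow_add_add_add (norm_nonneg q) hq).mul_left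
    (2 * (B₂ * B₂ * B₄ * B₄))) fun ⟨i, j, k, l⟩ => ?_
  have hden : ‖(qPoch (q ^ 2) (q ^ 2) i * qPoch (q ^ 2) (q ^ 2) j *
      qPoch (q ^ 4) (q ^ 4) k * qPoch (q ^ 4) (q ^ 4) l)⁻¹‖ ≤ B₂ * B₂ * B₄ * B₄ := by
    simp only [mul_inv, norm_mul]
    exact mul_le_mul (mul_le_mul (mul_le_mul (hB₂ i) (hB₂ j) (norm_nonneg _) h₂) (hB₄ k)
      (norm_nonneg _) (by positivity)) (hB₄ l) (norm_nonneg _) (by positivity)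
  rw [div_eq_mul_inv, norm_mul]
  calc _ ≤ 2 * ‖q‖ ^ (i + j + k + l) * (B₂ * B₂ * B₄ * B₄) :=
        mul_le_mul (norm_quadruple_numerator_le hq.le hx hy i j k l) hden (norm_nonneg _)
          (by positivity)
    _ = _ := by ring

lemma inner_double_sum_eq (hq : ‖q‖ < 1) (hx : ‖x‖ ≤ 1) (hy : ‖y‖ ≤ 1) (i : ℕ) :
    ∑' k, (y * q ^ 2 * (q ^ 4) ^ i) ^ k *
        (1 + x ^ 2 * q ^ 2 * (y * q ^ 2 * (q ^ 4) ^ i) * (q ^ 4) ^ k) / qPoch (q ^ 4) (q ^ 4) k *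
        ∑' l, (x ^ 2 * q ^ 2 * (q ^ 4) ^ k) ^ l / qPoch (q ^ 4) (q ^ 4) l =
      (1 - x ^ 2 * y ^ 2 * q ^ (8 * i + 6)) * qPochInf (x ^ 2 * y * q ^ 8) (q ^ 4) *
          qPoch (y * q ^ 2) (q ^ 4) i /
        (qPochInf (x ^ 2 * q ^ 2) (q ^ 4) * qPochInf (y * q ^ 2) (q ^ 4) *
          qPoch (x ^ 2 * y * q ^ 8) (q ^ 4) i) := by
  have hx2 : ‖x ^ 2‖ ≤ 1 := by rw [norm_pow]; exact pow_le_one₀ (norm_nonneg x) hx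
  have hx2y : ‖x ^ 2 * y‖ ≤ 1 := by rw [norm_mul]; exact mul_le_one₀ hx2 (norm_nonneg y) hy
  have hQ := norm_pow_lt_one hq four_ne_zero
  have ha := norm_mul_pow_lt_one_of_norm_le_one hx2 hq two_ne_zero
  have hyq := norm_mul_pow_lt_one_of_norm_le_one hy hq two_ne_zero
  have hx2yq := norm_mul_pow_lt_one_of_norm_le_one hx2y hq (m := 8) (by norm_num)
  have hz := norm_mul_pow_lt_one hyq hQ.le i
  calc _ = (qPochInf (x ^ 2 * q ^ 2) (q ^ 4))⁻¹ *
        ∑' k, qPoch (x ^ 2 * q ^ 2) (q ^ 4) k / qPoch (q ^ 4) (q ^ 4) k *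
          (y * q ^ 2 * (q ^ 4) ^ i) ^ k *
          (1 + x ^ 2 * q ^ 2 * (y * q ^ 2 * (q ^ 4) ^ i) * (q ^ 4) ^ k) := by
        rw [← tsum_mul_left]
        exact tsum_congr fun k => by rw [tsum_mul_pow_pow_div_qPoch ha hQ k]; ring
    _ = (qPochInf (x ^ 2 * q ^ 2) (q ^ 4))⁻¹ *
        ((1 - x ^ 2 * q ^ 2 * (y * q ^ 2 * (q ^ 4) ^ i) ^ 2) *
          qPochInf (x ^ 2 * y * q ^ 8 * (q ^ 4) ^ i) (q ^ 4) /
          qPochInf (y * q ^ 2 * (q ^ 4) ^ i) (q ^ 4)) := by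
        rw [tsum_qPoch_div_qPoch_mul_pow_mul_one_add _ hQ hz]
        ring_nf
    _ = _ := by
        rw [qPochInf_mul_pow hQ (qPoch_ne_zero hx2yq hQ.le i),
          qPochInf_mul_pow hQ (qPoch_ne_zero hyq hQ.le i)]
        field_simp
        ring

lemma tsum_quadruple_summand_eq_iterated (hq : ‖q‖ < 1) (hx : ‖x‖ ≤ 1) (hy : ‖y‖ ≤ 1) :
    ∑' n : ℕ × ℕ × ℕ × ℕ,
        x ^ (n.1 + n.2.1 + 2 * n.2.2.2) * y ^ (n.2.1 + n.2.2.1) *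
          q ^ (2 * Nat.choose n.1 2 + 2 * n.1 * n.2.1 + 4 * n.1 * n.2.2.1 +
            4 * n.2.2.1 * n.2.2.2 + n.1 + 3 * n.2.1 + 2 * n.2.2.1 + 2 * n.2.2.2) *
          (1 + x ^ 2 * y * q ^ (4 + 4 * (n.1 + n.2.2.1))) /
          (qPoch (q ^ 2) (q ^ 2) n.1 * qPoch (q ^ 2) (q ^ 2) n.2.1 *
            qPoch (q ^ 4) (q ^ 4) n.2.2.1 * qPoch (q ^ 4) (q ^ 4) n.2.2.2) =
      ∑' i, x ^ i * q ^ (2 * Nat.choose i 2 + i) / qPoch (q ^ 2) (q ^ 2) i *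
        (∑' j, (x * y * q ^ 3 * (q ^ 2) ^ i) ^ j / qPoch (q ^ 2) (q ^ 2) j) *
        ∑' k, (y * q ^ 2 * (q ^ 4) ^ i) ^ k *
            (1 + x ^ 2 * q ^ 2 * (y * q ^ 2 * (q ^ 4) ^ i) * (q ^ 4) ^ k) /
          qPoch (q ^ 4) (q ^ 4) k *
          ∑' l, (x ^ 2 * q ^ 2 * (q ^ 4) ^ k) ^ l / qPoch (q ^ 4) (q ^ 4) l := by
  have hfac := fun n : ℕ × ℕ × ℕ × ℕ => quadruple_summand_eq q x y n.1 n.2.1 n.2.2.1 n.2.2.2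
  rw [← tsum_four_eq_iterated]
  · exact tsum_congr hfac
  · exact (summable_quadruple_summand hq hx hy).congr hfac

end QuadrupleSum

/-- The reduction of the full quadruple sum (with the extra `1 + x²yq^{4+4(n₁+n₃)}` factor)
to a single sum of Rogers–Ramanujan type. -/
theorem quadruple_sum_to_single_sum (q x y : ℂ) (hq : ‖q‖ < 1)
    (hx : ‖x‖ ≤ 1) (hy : ‖y‖ ≤ 1) :
    ∑' n : ℕ × ℕ × ℕ × ℕ,
        x ^ (n.1 + n.2.1 + 2 * n.2.2.2) * y ^ (n.2.1 + n.2.2.1) *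
          q ^ (2 * Nat.choose n.1 2 + 2 * n.1 * n.2.1 + 4 * n.1 * n.2.2.1 +
            4 * n.2.2.1 * n.2.2.2 + n.1 + 3 * n.2.1 + 2 * n.2.2.1 + 2 * n.2.2.2) *
          (1 + x ^ 2 * y * q ^ (4 + 4 * (n.1 + n.2.2.1))) /
          (qPoch (q ^ 2) (q ^ 2) n.1 * qPoch (q ^ 2) (q ^ 2) n.2.1 *
            qPoch (q ^ 4) (q ^ 4) n.2.2.1 * qPoch (q ^ 4) (q ^ 4) n.2.2.2) =
      qPochInf (x ^ 2 * y * q ^ 8) (q ^ 4) /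
        (qPochInf (x ^ 2 * q ^ 2) (q ^ 4) * qPochInf (x * y * q ^ 3) (q ^ 2) *
          qPochInf (y * q ^ 2) (q ^ 4)) *
      ∑' n : ℕ,
        x ^ n * q ^ (2 * Nat.choose n 2 + n) * (1 - x ^ 2 * y ^ 2 * q ^ (8 * n + 6)) *
          qPoch (x * y * q ^ 3) (q ^ 2) n * qPoch (y * q ^ 2) (q ^ 4) n /
          (qPoch (q ^ 2) (q ^ 2) n * qPoch (x ^ 2 * y * q ^ 8) (q ^ 4) n) := by
  have hxy : ‖x * y‖ ≤ 1 := by rw [norm_mul]; exact mul_le_one₀ hx (norm_nonneg y) hy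
  rw [tsum_quadruple_summand_eq_iterated hq hx hy, ← tsum_mul_left]
  refine tsum_congr fun i => ?_
  rw [tsum_mul_pow_pow_div_qPoch (norm_mul_pow_lt_one_of_norm_le_one hxy hq three_ne_zero)
    (norm_pow_lt_one hq two_ne_zero) i, inner_double_sum_eq hq hx hy i]
  ring
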